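/- Let T ∈ B_A(H) admit an A-adjoint T^{♯} and let q be a complex number with |q| ≤ 1. Then w_{q,A}(T)² ≤ ((2 − |q|² + 4|q|√(1−|q|²))/2)·‖TT^{♯} + T^{♯}T‖_A. -/

import Mathlib

open scoped InnerProductSpace

variable {H : Type*} [NormedAddCommGroup H] [InnerProductSpace ℂ H] [CompleteSpace H]

/-- The semi-inner product induced by `A`: `⟨x,y⟩_A = ⟨Ax,y⟩`
(linear in the first argument, as in the paper). -/
noncomputable def sip (A : H →L[ℂ] H) (x y : H) : ℂ := @inner ℂ H _ y (A x)

/-- The seminorm induced by `A`. -/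
noncomputable def normA (A : H →L[ℂ] H) (x : H) : ℝ := Real.sqrt (sip A x x).re

/-- The `A`-`q`-numerical radius of `T`. -/
noncomputable def wqA (A T : H →L[ℂ] H) (q : ℂ) : ℝ :=
  sSup {r : ℝ | ∃ x y : H, normA A x = 1 ∧ normA A y = 1 ∧ sip A x y = q ∧
    r = ‖sip A (T x) y‖}

/-- The `A`-operator seminorm of `T`. -/
noncomputable def opNormA (A T : H →L[ℂ] H) : ℝ :=
  sSup {r : ℝ | ∃ x ∈ closure (Set.range fun v => A v), x ≠ 0 ∧ r = normA A (T x) / normA A x}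

/-!
Put `R = TS + ST`. For `‖x‖_A = 1` one has `‖Tx‖_A² + ‖Sx‖_A² = Re ⟨Rx, x⟩_A ≤ ‖R‖_A`, while
`|⟨Tx, x⟩_A|` is bounded both by `‖Tx‖_A` and by `|⟨x, Sx⟩_A| ≤ ‖Sx‖_A`, hence by `√(‖R‖_A / 2)`.
If moreover `‖y‖_A = 1` and `⟨x, y⟩_A = q`, then `y = q̄ x + z` with `‖z‖_A = √(1 - |q|²)`, so
`|⟨Tx, y⟩_A| ≤ |q| √(‖R‖_A / 2) + √(1 - |q|²) √‖R‖_A`, and squaring gives the bound.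

The supremum defining `‖R‖_A` only runs over `closure (range A)`: projecting `x` onto that
subspace changes neither `A x` nor `A R x`. That supremum is finite because an operator that is
self-adjoint for `⟨·,·⟩_A` is bounded for `‖·‖_A`.
-/

open scoped ComplexConjugate
open Filter Topology

section RealSequences

lemma le_of_forall_mul_pow_two_pow_le {x y m K : ℝ} (hy : 0 ≤ y) (hm : 0 < m)
    (h : ∀ n : ℕ, m * x ^ 2 ^ n ≤ K * y ^ 2 ^ n) : x ≤ y := by
  by_contra! hyx
  have hx : 0 < x := hy.trans_lt hyx
  have hlim : Tendsto (fun n : ℕ => K * (y / x) ^ 2 ^ n) atTop (𝓝 0) := by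
    simpa using ((tendsto_pow_atTop_nhds_zero_of_lt_one (div_nonneg hy hx.le)
      ((div_lt_one hx).2 hyx)).comp (tendsto_pow_atTop_atTop_of_one_lt one_lt_two)).const_mul K
  have hle : ∀ n : ℕ, m ≤ K * (y / x) ^ 2 ^ n := fun n => by
    rw [div_pow, mul_div_assoc', le_div_iff₀ (by positivity)]
    exact h n
  exact hm.not_ge (ge_of_tendsto' hlim hle)

lemma le_mul_of_sq_le_mul_succ {c : ℕ → ℝ} {m K L : ℝ} (hm : 0 ≤ m) (hL : 0 ≤ L)
    (hc : ∀ n, 0 ≤ c n) (hstep : ∀ n, c n ^ 2 ≤ m * c (n + 1))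
    (hbound : ∀ n, c n ≤ K * L ^ 2 ^ n) : c 0 ≤ L * m := by
  rcases hm.eq_or_lt with rfl | hm
  · nlinarith [hstep 0, hc 0]
  have hiter : ∀ n : ℕ, m * c 0 ^ 2 ^ n ≤ m ^ 2 ^ n * c n := by
    intro n
    induction n with
    | zero => simp
    | succ n ih =>
      refine le_of_mul_le_mul_left ?_ hm
      calc m * (m * c 0 ^ 2 ^ (n + 1)) = (m * c 0 ^ 2 ^ n) ^ 2 := by ring
        _ ≤ (m ^ 2 ^ n * c n) ^ 2 := pow_le_pow_left₀ (by have := hc 0; positivity) ih 2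
        _ = m ^ 2 ^ (n + 1) * c n ^ 2 := by ring
        _ ≤ m ^ 2 ^ (n + 1) * (m * c (n + 1)) := by gcongr; exact hstep n
        _ = m * (m ^ 2 ^ (n + 1) * c (n + 1)) := by ring
  refine le_of_forall_mul_pow_two_pow_le (K := K) (by positivity) hm fun n => ?_
  calc m * c 0 ^ 2 ^ n ≤ m ^ 2 ^ n * (K * L ^ 2 ^ n) := (hiter n).trans (by gcongr; exact hbound n)
    _ = K * (L * m) ^ 2 ^ n := by ring

end RealSequences

section SemiInnerProduct

variable {E : Type*} [NormedAddCommGroup E] [InnerProductSpace ℂ E] {A : E →L[ℂ] E}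

lemma apply_apply_of_semiconjBy {W V : E →L[ℂ] E} (h : SemiconjBy A W V) (x : E) :
    A (W x) = V (A x) :=
  DFunLike.congr_fun h x

lemma sip_conj (hA : A.IsPositive) (x y : E) : conj (sip A x y) = sip A y x := by
  rw [sip, sip, inner_conj_symm, hA.inner_left_eq_inner_right]

lemma normA_nonneg (A : E →L[ℂ] E) (x : E) : 0 ≤ normA A x := Real.sqrt_nonneg _

lemma normA_sq (hA : A.IsPositive) (x : E) : normA A x ^ 2 = (sip A x x).re :=
  Real.sq_sqrt (hA.re_inner_nonneg_right x)

lemma sip_self (hA : A.IsPositive) (x : E) : sip A x x = (normA A x ^ 2 : ℝ) := by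
  refine Complex.ext ?_ ?_
  · rw [normA_sq hA, Complex.ofReal_re]
  · have h := congrArg Complex.im (sip_conj hA x x)
    rw [Complex.conj_im] at h
    rw [Complex.ofReal_im]
    linarith

lemma normA_zero (A : E →L[ℂ] E) : normA A 0 = 0 := by
  simp [normA, sip]

lemma opNormA_nonneg (A W : E →L[ℂ] E) : 0 ≤ opNormA A W := Real.sSup_nonneg <| by
  rintro r ⟨x, -, -, rfl⟩
  exact div_nonneg (normA_nonneg A _) (normA_nonneg A _)

lemma wqA_nonneg (A T : E →L[ℂ] E) (q : ℂ) : 0 ≤ wqA A T q := Real.sSup_nonneg <| by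
  rintro r ⟨x, y, -, -, -, rfl⟩
  exact norm_nonneg _

noncomputable abbrev preInnerProductCore (hA : A.IsPositive) : PreInnerProductSpace.Core ℂ E where
  inner x y := ⟪x, A y⟫_ℂ
  conj_inner_symm x y := by
    change conj ⟪y, A x⟫_ℂ = ⟪x, A y⟫_ℂ
    rw [inner_conj_symm, hA.inner_left_eq_inner_right]
  re_inner_nonneg x := hA.re_inner_nonneg_right x
  add_left x y z := inner_add_left x y (A z)
  smul_left x y r := inner_smul_left x (A y) r

lemma norm_sip_le (hA : A.IsPositive) (u v : E) : ‖sip A u v‖ ≤ normA A u * normA A v := by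
  rw [mul_comm]
  exact @InnerProductSpace.Core.norm_inner_le_norm ℂ E _ _ _ (preInnerProductCore hA) v u

lemma normA_le (A : E →L[ℂ] E) (u : E) : normA A u ≤ √‖A‖ * ‖u‖ := by
  rw [← Real.sqrt_sq (norm_nonneg u), ← Real.sqrt_mul (norm_nonneg A)]
  refine Real.sqrt_le_sqrt ?_
  calc (sip A u u).re ≤ ‖⟪u, A u⟫_ℂ‖ := Complex.re_le_norm _
    _ ≤ ‖u‖ * (‖A‖ * ‖u‖) := (norm_inner_le_norm _ _).trans (by gcongr; exact A.le_opNorm u)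
    _ = ‖A‖ * ‖u‖ ^ 2 := by ring

lemma normA_eq_of_apply_eq (hA : A.IsPositive) {x x' : E} (h : A x = A x') :
    normA A x = normA A x' := by
  have hsip : sip A x x = sip A x' x' := by
    rw [sip, sip, h, ← hA.inner_left_eq_inner_right, ← hA.inner_left_eq_inner_right, h]
  rw [normA, normA, hsip]

lemma exists_mem_closure_range_apply_eq [CompleteSpace E] (hA : A.IsPositive) (x : E) :
    ∃ p ∈ closure (Set.range fun v => A v), A p = A x := by
  set U := (LinearMap.range (A : E →ₗ[ℂ] E)).topologicalClosure
  refine ⟨U.starProjection x, ?_, ?_⟩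
  · have hU : (U : Set E) = closure (Set.range fun v => A v) := by
      rw [Submodule.topologicalClosure_coe, LinearMap.coe_range]
      rfl
    exact hU ▸ U.starProjection_apply_mem x
  · have hker : x - U.starProjection x ∈ LinearMap.ker (A : E →ₗ[ℂ] E) := by
      have h := U.sub_starProjection_mem_orthogonal x
      rwa [Submodule.orthogonal_closure, A.orthogonal_range,
        hA.isSelfAdjoint.adjoint_eq] at h
    rw [LinearMap.mem_ker, map_sub, sub_eq_zero] at hker
    exact hker.symm

end SemiInnerProduct

section SelfAdjointness

variable {E : Type*} [NormedAddCommGroup E] [InnerProductSpace ℂ E] [CompleteSpace E]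
  {A W : E →L[ℂ] E}

lemma normA_apply_sq_le (hA : A.IsPositive) (hW : SemiconjBy A W (star W)) (v : E) :
    normA A (W v) ^ 2 ≤ normA A v * normA A ((W * W) v) := by
  have hsip : sip A (W v) (W v) = sip A v ((W * W) v) := by
    rw [sip, sip, apply_apply_of_semiconjBy hW, ContinuousLinearMap.star_eq_adjoint,
      ContinuousLinearMap.adjoint_inner_right]
    rfl
  rw [normA_sq hA, hsip]
  exact (Complex.re_le_norm _).trans (norm_sip_le hA _ _)

/-- Iterate `‖W v‖_A² ≤ ‖v‖_A ‖W² v‖_A` along the powers `W ^ 2 ^ n` and compare with the crude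
bound `‖W ^ 2 ^ n v‖_A ≤ √‖A‖ ‖v‖ ‖W‖ ^ 2 ^ n`. -/
lemma normA_apply_le (hA : A.IsPositive) (hW : SemiconjBy A W (star W)) (v : E) :
    normA A (W v) ≤ ‖W‖ * normA A v := by
  have hpow : ∀ n : ℕ, SemiconjBy A (W ^ n) (star (W ^ n)) := fun n => by
    simpa only [star_pow] using hW.pow_right n
  have h := le_mul_of_sq_le_mul_succ (c := fun n => normA A ((W ^ 2 ^ n) v))
    (K := √‖A‖ * ‖v‖) (normA_nonneg A v) (norm_nonneg W) (fun n => normA_nonneg A _)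
    (fun n => by simpa only [← pow_add, ← two_mul, ← pow_succ'] using
      normA_apply_sq_le hA (hpow (2 ^ n)) v)
    (fun n => calc
      normA A ((W ^ 2 ^ n) v) ≤ √‖A‖ * (‖W ^ 2 ^ n‖ * ‖v‖) :=
        (normA_le A _).trans (by gcongr; exact (W ^ 2 ^ n).le_opNorm v)
      _ ≤ √‖A‖ * (‖W‖ ^ 2 ^ n * ‖v‖) := by gcongr; exact norm_pow_le' W (Nat.two_pow_pos n)
      _ = √‖A‖ * ‖v‖ * ‖W‖ ^ 2 ^ n := by ring)
  simpa using h

lemma normA_apply_le_opNormA (hA : A.IsPositive) (hW : SemiconjBy A W (star W)) (x : E) :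
    normA A (W x) ≤ opNormA A W * normA A x := by
  obtain ⟨p, hp, hpx⟩ := exists_mem_closure_range_apply_eq hA x
  have hWp : A (W p) = A (W x) := by
    rw [apply_apply_of_semiconjBy hW, apply_apply_of_semiconjBy hW, hpx]
  rcases (normA_nonneg A x).eq_or_lt with h0 | hpos
  · have := normA_apply_le hA hW x
    rw [← h0, mul_zero] at this ⊢
    exact this
  have hbdd : BddAbove {r : ℝ | ∃ x ∈ closure (Set.range fun v => A v), x ≠ 0 ∧
      r = normA A (W x) / normA A x} := by
    refine ⟨‖W‖, ?_⟩
    rintro r ⟨y, -, -, rfl⟩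
    exact div_le_of_le_mul₀ (normA_nonneg A y) (norm_nonneg W) (normA_apply_le hA hW y)
  rw [← normA_eq_of_apply_eq hA hpx] at hpos
  have hp0 : p ≠ 0 := by
    rintro rfl
    rw [normA_zero] at hpos
    exact hpos.false
  have hle := le_csSup hbdd ⟨p, hp, hp0, rfl⟩
  rw [normA_eq_of_apply_eq hA hWp, div_le_iff₀ hpos, normA_eq_of_apply_eq hA hpx] at hle
  exact hle

end SelfAdjointness

lemma sq_mul_add_mul_le {t a b N : ℝ} (ht : 0 ≤ t) (ht1 : t ≤ 1) (haN : 2 * a ^ 2 ≤ N)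
    (hbN : b ^ 2 ≤ N) :
    (t * a + √(1 - t ^ 2) * b) ^ 2 ≤ (2 - t ^ 2 + 4 * t * √(1 - t ^ 2)) / 2 * N := by
  set s := √(1 - t ^ 2)
  have hs : 0 ≤ s := Real.sqrt_nonneg _
  have hs2 : s ^ 2 = 1 - t ^ 2 := Real.sq_sqrt (by nlinarith)
  have hab : a * b ≤ N := abs_le_of_sq_le_sq' (by nlinarith) (by nlinarith) |>.2
  nlinarith [mul_le_mul_of_nonneg_left hab (mul_nonneg ht hs)]

section AAdjoint

variable {E : Type*} [NormedAddCommGroup E] [InnerProductSpace ℂ E] [CompleteSpace E]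
  {A T S : E →L[ℂ] E}

lemma semiconjBy_star_of_semiconjBy (hA : A.IsPositive) (hS : SemiconjBy A S (star T)) :
    SemiconjBy A T (star S) := by
  have h := congrArg star hS.eq
  rw [star_mul, star_mul, star_star, hA.isSelfAdjoint.star_eq] at h
  exact h.symm

lemma semiconjBy_anticommutator (hA : A.IsPositive) (hS : SemiconjBy A S (star T)) :
    SemiconjBy A (T * S + S * T) (star (T * S + S * T)) := by
  have hT := semiconjBy_star_of_semiconjBy hA hS
  rw [star_add, star_mul, star_mul]
  exact (hT.mul_right hS).add_right (hS.mul_right hT)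

lemma normA_sq_add_normA_sq_le (hA : A.IsPositive) (hS : SemiconjBy A S (star T)) (x : E) :
    normA A (T x) ^ 2 + normA A (S x) ^ 2 ≤ opNormA A (T * S + S * T) * normA A x ^ 2 := by
  have hT := semiconjBy_star_of_semiconjBy hA hS
  have hsip : sip A ((T * S + S * T) x) x = sip A (S x) (S x) + sip A (T x) (T x) := by
    change ⟪x, A (T (S x) + S (T x))⟫_ℂ = ⟪S x, A (S x)⟫_ℂ + ⟪T x, A (T x)⟫_ℂ
    rw [map_add, inner_add_right, apply_apply_of_semiconjBy hT (S x),
      apply_apply_of_semiconjBy hS (T x),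
      ContinuousLinearMap.star_eq_adjoint, ContinuousLinearMap.star_eq_adjoint,
      ContinuousLinearMap.adjoint_inner_right, ContinuousLinearMap.adjoint_inner_right]
  calc normA A (T x) ^ 2 + normA A (S x) ^ 2 = (sip A ((T * S + S * T) x) x).re := by
        rw [hsip, Complex.add_re, normA_sq hA, normA_sq hA, add_comm]
    _ ≤ normA A ((T * S + S * T) x) * normA A x :=
        (Complex.re_le_norm _).trans (norm_sip_le hA _ _)
    _ ≤ opNormA A (T * S + S * T) * normA A x * normA A x := by
        gcongr
        · exact normA_nonneg A x
        · exact normA_apply_le_opNormA hA (semiconjBy_anticommutator hA hS) x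
    _ = opNormA A (T * S + S * T) * normA A x ^ 2 := by ring

end AAdjoint

section Estimate

variable {E : Type*} [NormedAddCommGroup E] [InnerProductSpace ℂ E] {A : E →L[ℂ] E}

lemma norm_sip_le_of_normA_eq_one (hA : A.IsPositive) {x y : E} (hx : normA A x = 1)
    (hy : normA A y = 1) (u : E) :
    ‖sip A u y‖ ≤ ‖sip A x y‖ * ‖sip A u x‖ + √(1 - ‖sip A x y‖ ^ 2) * normA A u := by
  set q := sip A x y with hq
  set z := y - conj q • x
  have hsplit : sip A u y = q * sip A u x + sip A u z := by
    simp only [sip, z, inner_sub_left, inner_smul_left, Complex.conj_conj]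
    ring
  have hzz : sip A z z = ((1 - ‖q‖ ^ 2 : ℝ) : ℂ) := by
    have hxx : sip A x x = 1 := by simpa [hx] using sip_self hA x
    have hyy : sip A y y = 1 := by simpa [hy] using sip_self hA y
    have hyx := sip_conj hA x y
    simp only [sip, z, map_sub, map_smul, inner_sub_left, inner_sub_right, inner_smul_left,
      inner_smul_right, Complex.conj_conj] at hxx hyy hyx hq ⊢
    rw [hxx, hyy, ← hyx, ← hq, Complex.ofReal_sub, Complex.ofReal_one, Complex.ofReal_pow,
      ← Complex.mul_conj']
    ring
  have hz : normA A z = √(1 - ‖q‖ ^ 2) := by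
    rw [normA, hzz, Complex.ofReal_re]
  calc ‖sip A u y‖ ≤ ‖q * sip A u x‖ + ‖sip A u z‖ := hsplit ▸ norm_add_le _ _
    _ ≤ ‖q‖ * ‖sip A u x‖ + normA A u * normA A z := by
        rw [norm_mul]
        gcongr
        exact norm_sip_le hA u z
    _ = ‖q‖ * ‖sip A u x‖ + √(1 - ‖q‖ ^ 2) * normA A u := by rw [hz, mul_comm (normA A u)]

variable [CompleteSpace E] {T S : E →L[ℂ] E}

lemma norm_sip_apply_sq_le (hA : A.IsPositive) (hS : SemiconjBy A S (star T)) {x y : E}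
    (hx : normA A x = 1) (hy : normA A y = 1) :
    ‖sip A (T x) y‖ ^ 2 ≤ (2 - ‖sip A x y‖ ^ 2 + 4 * ‖sip A x y‖ * √(1 - ‖sip A x y‖ ^ 2)) / 2 *
      opNormA A (T * S + S * T) := by
  have hsum := normA_sq_add_normA_sq_le hA hS x
  rw [hx, one_pow, mul_one] at hsum
  have hTx : ‖sip A (T x) x‖ ≤ normA A (T x) := by
    simpa only [hx, mul_one] using norm_sip_le hA (T x) x
  have hSx : ‖sip A (T x) x‖ ≤ normA A (S x) := by
    have hsip : sip A (T x) x = sip A x (S x) := by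
      rw [sip, sip, apply_apply_of_semiconjBy (semiconjBy_star_of_semiconjBy hA hS),
        ContinuousLinearMap.star_eq_adjoint, ContinuousLinearMap.adjoint_inner_right]
    simpa only [hsip, hx, one_mul] using norm_sip_le hA x (S x)
  have hq : ‖sip A x y‖ ≤ 1 := by
    simpa only [hx, hy, mul_one] using norm_sip_le hA x y
  have hTx2 := pow_le_pow_left₀ (norm_nonneg _) hTx 2
  have hSx2 := pow_le_pow_left₀ (norm_nonneg _) hSx 2
  calc ‖sip A (T x) y‖ ^ 2
      ≤ (‖sip A x y‖ * ‖sip A (T x) x‖ + √(1 - ‖sip A x y‖ ^ 2) * normA A (T x)) ^ 2 :=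
        pow_le_pow_left₀ (norm_nonneg _) (norm_sip_le_of_normA_eq_one hA hx hy (T x)) 2
    _ ≤ _ := sq_mul_add_mul_le (norm_nonneg _) hq (by linarith)
        (by nlinarith [normA_nonneg A (S x)])

end Estimate

theorem stmt4_general (A T S : H →L[ℂ] H) (hA : A.IsPositive)
    (hS : A ∘L S = (ContinuousLinearMap.adjoint T) ∘L A)
    (q : ℂ) (hq : ‖q‖ ≤ 1) :
    (wqA A T q) ^ 2 ≤
      (2 - ‖q‖ ^ 2 + 4 * ‖q‖ * Real.sqrt (1 - ‖q‖ ^ 2)) / 2 *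
        opNormA A (T ∘L S + S ∘L T) := by
  set C := (2 - ‖q‖ ^ 2 + 4 * ‖q‖ * Real.sqrt (1 - ‖q‖ ^ 2)) / 2
  have hC : 0 ≤ C * opNormA A (T ∘L S + S ∘L T) := by
    refine mul_nonneg ?_ (opNormA_nonneg A _)
    have := Real.sqrt_nonneg (1 - ‖q‖ ^ 2)
    dsimp only [C]
    nlinarith [norm_nonneg q]
  have hw : wqA A T q ≤ √(C * opNormA A (T ∘L S + S ∘L T)) := by
    refine Real.sSup_le ?_ (Real.sqrt_nonneg _)
    rintro r ⟨x, y, hx, hy, rfl, rfl⟩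
    exact Real.le_sqrt_of_sq_le (norm_sip_apply_sq_le hA hS hx hy)
  exact (pow_le_pow_left₀ (wqA_nonneg A T q) hw 2).trans (Real.sq_sqrt hC).le

theorem stmt4 (A T S : H →L[ℂ] H) (hA : A.IsPositive)
    (hrank : 2 ≤ Module.rank ℂ (LinearMap.range (A : H →ₗ[ℂ] H)))
    (hS : A ∘L S = (ContinuousLinearMap.adjoint T) ∘L A)
    (q : ℂ) (hq : ‖q‖ ≤ 1) :
    (wqA A T q) ^ 2 ≤
      (2 - ‖q‖ ^ 2 + 4 * ‖q‖ * Real.sqrt (1 - ‖q‖ ^ 2)) / 2 *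
        opNormA A (T ∘L S + S ∘L T) :=
  stmt4_general A T S hA hS q hq
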